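/- Every simplicial group is a Kan complex; that is, for a functor G : Δ^op → Grp, the underlying simplicial set of G admits fillers for all horns Λ^p_i ↪ Δ^p with p ≥ 1 and 0 ≤ i ≤ p. -/

import Mathlib

open CategoryTheory Simplicial

universe u

/-- The old Mathlib (Dec 2024) class `SSet.KanComplex`: horn filling for every `n : ℕ`
(including `n = 0`) and every `i : Fin (n + 1)`. -/
class SSet.KanComplexOld (S : SSet.{u}) : Prop where
  hornFilling : ∀ ⦃n : ℕ⦄ ⦃i : Fin (n+1)⦄ (σ₀ : (Λ[n, i] : SSet) ⟶ S),
    ∃ σ : Δ[n] ⟶ S, σ₀ = Λ[n, i].ι ≫ σ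

/-!
Moore's algorithm. Given a compatible family `x j` (`j ≠ i`) of faces, build `w` whose faces
agree with it one index at a time: first `0, 1, …, i - 1`, then `n + 2, n + 1, …, i + 1`.
To correct face `k` of `w`, replace `w` by `w * σ_r y` with `y = (δ_k w)⁻¹ * x k` and
`δ_k ∘ σ_r = id`. The faces of `σ_r y` at indices `j < r` or `j > r + 1` are degeneracies of
faces of `y`, and compatibility makes those trivial as soon as `δ_j w = x j`; the order of the
corrections is chosen so that every face already corrected lies in that range.
-/

namespace SSet

variable {S : SSet.{u}}

lemma δ_castPred_δ_apply {n : ℕ} {j k : Fin (n + 3)} (hjk : j < k) (x : S _⦋n + 2⦌) :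
    S.δ (j.castPred (Fin.ne_last_of_lt hjk)) (S.δ k x) =
      S.δ (k.pred (Fin.ne_zero_of_lt hjk)) (S.δ j x) := by
  simpa using δ_comp_δ'_apply (i := j.castPred (Fin.ne_last_of_lt hjk)) (by simpa using hjk) x

lemma δ_comp_σ_of_lt_apply {n : ℕ} {j : Fin (n + 3)} {r : Fin (n + 2)} (h : j < r.castSucc)
    (y : S _⦋n + 1⦌) :
    S.δ j (S.σ r y) = S.σ (r.pred (Fin.castSucc_ne_zero_iff.mp (Fin.ne_zero_of_lt h)))
      (S.δ (j.castPred (Fin.ne_last_of_lt h)) y) := by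
  obtain ⟨r, rfl⟩ := Fin.eq_succ_of_ne_zero (Fin.castSucc_ne_zero_iff.mp (Fin.ne_zero_of_lt h))
  obtain ⟨j, rfl⟩ := Fin.eq_castSucc_of_ne_last (Fin.ne_last_of_lt h)
  simp only [Fin.pred_succ, Fin.castPred_castSucc]
  exact δ_comp_σ_of_le_apply (Fin.le_castSucc_iff.mpr h) y

lemma exists_one_simplex_δ_eq (i : Fin 2) (x : ∀ j : Fin 2, j ≠ i → S _⦋0⦌) :
    ∃ g : S _⦋1⦌, ∀ j hj, S.δ j g = x j hj := by
  fin_cases i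
  · exact ⟨S.σ 0 (x 1 (by decide)), fun j hj => by
      fin_cases j
      exacts [absurd rfl hj, δ_comp_σ_succ_apply 0 _]⟩
  · exact ⟨S.σ 0 (x 0 (by decide)), fun j hj => by
      fin_cases j
      exacts [δ_comp_σ_self_apply 0 _, absurd rfl hj]⟩

lemma kanComplexOld_of_kanComplex [KanComplex S] (s : S _⦋0⦌) : S.KanComplexOld where
  hornFilling n i σ₀ := by
    cases n with
    | zero =>
      refine ⟨yonedaEquiv.symm s, ?_⟩
      ext m α
      -- `Λ[0, i]` has no simplices
      exact absurd (Set.eq_univ_of_forall fun k => Or.inr (Subsingleton.elim (α := Fin 1) k i)) α.2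
    | succ n => exact KanComplex.hornFilling σ₀

end SSet

namespace CategoryTheory.SimplicialObject

open SSet

abbrev toSSet (G : SimplicialObject GrpCat.{u}) : SSet.{u} := G ⋙ forget GrpCat

instance (G : SimplicialObject GrpCat.{u}) (m : SimplexCategoryᵒᵖ) : Group (G.toSSet.obj m) :=
  inferInstanceAs (Group (G.obj m))

variable {G : SimplicialObject GrpCat.{u}} {n : ℕ}

lemma toSSet_δ_mul (j : Fin (n + 2)) (a b : G.toSSet _⦋n + 1⦌) :
    G.toSSet.δ j (a * b) = G.toSSet.δ j a * G.toSSet.δ j b :=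
  map_mul (G.δ j).hom a b

lemma toSSet_δ_inv (j : Fin (n + 2)) (a : G.toSSet _⦋n + 1⦌) :
    G.toSSet.δ j a⁻¹ = (G.toSSet.δ j a)⁻¹ :=
  map_inv (G.δ j).hom a

lemma toSSet_σ_one (j : Fin (n + 1)) : G.toSSet.σ j (1 : G.toSSet _⦋n⦌) = 1 :=
  map_one (G.σ j).hom

section Filler

variable {i : Fin (n + 3)} {x : ∀ j, j ≠ i → G.toSSet _⦋n + 1⦌}
  (hx : ∀ j k (hj : j ≠ i) (hk : k ≠ i) (hjk : j < k),
    G.toSSet.δ (k.pred (Fin.ne_zero_of_lt hjk)) (x j hj) =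
      G.toSSet.δ (j.castPred (Fin.ne_last_of_lt hjk)) (x k hk))

include hx

lemma δ_castPred_inv_δ_mul_eq_one {w : G.toSSet _⦋n + 2⦌} {j k : Fin (n + 3)} (hj : j ≠ i)
    (hk : k ≠ i) (hjk : j < k) (hwj : G.toSSet.δ j w = x j hj) :
    G.toSSet.δ (j.castPred (Fin.ne_last_of_lt hjk)) ((G.toSSet.δ k w)⁻¹ * x k hk) = 1 := by
  rw [toSSet_δ_mul, toSSet_δ_inv, δ_castPred_δ_apply hjk, hwj, hx j k hj hk hjk, inv_mul_cancel]

lemma δ_pred_inv_δ_mul_eq_one {w : G.toSSet _⦋n + 2⦌} {j k : Fin (n + 3)} (hj : j ≠ i)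
    (hk : k ≠ i) (hkj : k < j) (hwj : G.toSSet.δ j w = x j hj) :
    G.toSSet.δ (j.pred (Fin.ne_zero_of_lt hkj)) ((G.toSSet.δ k w)⁻¹ * x k hk) = 1 := by
  rw [toSSet_δ_mul, toSSet_δ_inv, ← δ_castPred_δ_apply hkj, hwj, hx k j hk hj hkj,
    inv_mul_cancel]

lemma exists_δ_eq_preserving (w : G.toSSet _⦋n + 2⦌) (r : Fin (n + 2)) {k : Fin (n + 3)}
    (hk : k ≠ i) (hkr : k = r.castSucc ∨ k = r.succ) :
    ∃ w', G.toSSet.δ k w' = x k hk ∧ ∀ j (hj : j ≠ i), (j < r.castSucc ∨ r.succ < j) →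
      G.toSSet.δ j w = x j hj → G.toSSet.δ j w' = x j hj := by
  set y := (G.toSSet.δ k w)⁻¹ * x k hk
  have hσ : G.toSSet.δ k (G.toSSet.σ r y) = y := by
    rcases hkr with rfl | rfl
    exacts [δ_comp_σ_self_apply r y, δ_comp_σ_succ_apply r y]
  have hk_le : r.castSucc ≤ k ∧ k ≤ r.succ := by
    rcases hkr with rfl | rfl
    exacts [⟨le_rfl, Fin.castSucc_le_succ r⟩, ⟨Fin.castSucc_le_succ r, le_rfl⟩]
  refine ⟨w * G.toSSet.σ r y, by rw [toSSet_δ_mul, hσ, mul_inv_cancel_left], ?_⟩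
  rintro j hj (hjr | hrj) hwj
  · rw [toSSet_δ_mul, δ_comp_σ_of_lt_apply hjr, hwj,
      δ_castPred_inv_δ_mul_eq_one hx hj hk (hjr.trans_le hk_le.1) hwj, toSSet_σ_one, mul_one]
  · rw [toSSet_δ_mul, δ_comp_σ_of_gt'_apply hrj, hwj,
      δ_pred_inv_δ_mul_eq_one hx hj hk (hk_le.2.trans_lt hrj) hwj, toSSet_σ_one, mul_one]

lemma exists_δ_eq_of_lt (m : ℕ) (hm : m ≤ i) :
    ∃ w : G.toSSet _⦋n + 2⦌, ∀ j (hj : j ≠ i), (j : ℕ) < m → G.toSSet.δ j w = x j hj := by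
  induction m with
  | zero => exact ⟨1, fun j _ hj => absurd hj (Nat.not_lt_zero _)⟩
  | succ m ih =>
    obtain ⟨w, hw⟩ := ih (by omega)
    let r : Fin (n + 2) := ⟨m, by omega⟩
    have hr : r.castSucc ≠ i := Fin.ne_of_val_ne (by simp [r]; omega)
    obtain ⟨w', hw'r, hw'⟩ := exists_δ_eq_preserving hx w r hr (Or.inl rfl)
    refine ⟨w', fun j hj hjm => ?_⟩
    rcases Nat.lt_succ_iff_lt_or_eq.mp hjm with hjm | hjm
    · exact hw' j hj (Or.inl hjm) (hw j hj hjm)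
    · obtain rfl : j = r.castSucc := Fin.ext hjm
      exact hw'r

lemma exists_δ_eq_of_lt_or_le (m : ℕ) (him : i < m) (hm : m ≤ n + 3) :
    ∃ w : G.toSSet _⦋n + 2⦌, ∀ j (hj : j ≠ i), (j < i ∨ m ≤ j) → G.toSSet.δ j w = x j hj := by
  induction hm using Nat.decreasingInduction with
  | self =>
    obtain ⟨w, hw⟩ := exists_δ_eq_of_lt hx i le_rfl
    exact ⟨w, fun j hj h => hw j hj (h.resolve_right (by omega))⟩
  | of_succ m hm ih =>
    obtain ⟨w, hw⟩ := ih (by omega)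
    let r : Fin (n + 2) := ⟨m - 1, by omega⟩
    have hr : r.succ ≠ i := Fin.ne_of_val_ne (by simp [r]; omega)
    obtain ⟨w', hw'r, hw'⟩ := exists_δ_eq_preserving hx w r hr (Or.inr rfl)
    refine ⟨w', fun j hj hjm => ?_⟩
    rcases hjm with hji | hmj
    · exact hw' j hj (Or.inl (Fin.lt_def.mpr (by simp [r]; omega))) (hw j hj (Or.inl hji))
    · rcases hmj.lt_or_eq with hmj | hmj
      · exact hw' j hj (Or.inr (Fin.lt_def.mpr (by simp [r]; omega))) (hw j hj (Or.inr hmj))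
      · obtain rfl : j = r.succ := Fin.ext (by simp [r]; omega)
        exact hw'r

lemma exists_δ_eq_of_compatible : ∃ w : G.toSSet _⦋n + 2⦌, ∀ j hj, G.toSSet.δ j w = x j hj := by
  obtain ⟨w, hw⟩ := exists_δ_eq_of_lt_or_le hx (i + 1) (by omega) (by omega)
  exact ⟨w, fun j hj => hw j hj ((lt_or_gt_of_ne hj).imp_right id)⟩

end Filler

instance kanComplex_toSSet (G : SimplicialObject GrpCat.{u}) : KanComplex G.toSSet := by
  rw [KanComplex.iff]
  intro n i f hf
  obtain ⟨g, hg⟩ : ∃ g : G.toSSet _⦋n + 1⦌, ∀ j hj, G.toSSet.δ j g = SSet.yonedaEquiv (f j hj) := by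
    cases n with
    | zero => exact exists_one_simplex_δ_eq i _
    | succ n =>
      refine exists_δ_eq_of_compatible fun j k hj hk hjk => ?_
      simpa only [stdSimplex.yonedaEquiv_δ_comp] using congrArg SSet.yonedaEquiv (hf j k hj hk hjk)
  exact ⟨SSet.yonedaEquiv.symm g, fun j hj => by
    rw [stdSimplex.δ_comp_yonedaEquiv_symm, hg, Equiv.symm_apply_apply]⟩

end CategoryTheory.SimplicialObject

/-- Every simplicial group is a Kan complex (theorem of Moore): for a functor
`G : Δᵒᵖ ⥤ Grp`, the underlying simplicial set of `G` admits fillers for all horns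
`Λ[n, i] ↪ Δ[n]`. -/
theorem simplicialGroup_kanComplex (G : SimplicialObject GrpCat.{0}) :
    SSet.KanComplexOld (G ⋙ forget GrpCat : SimplexCategoryᵒᵖ ⥤ Type) :=
  SSet.kanComplexOld_of_kanComplex (S := G.toSSet) 1
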